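/- Let V be an F-vector space and 𝓛 a series in V such that the 𝓛-topology on V (the vector-space topology with 𝓛\{0} a neighborhood basis at 0) is Hausdorff and complete. Let W ≤ V be a dense subspace and let h ∈ GL(W) belong to the stability group of the series {U ∩ W : U ∈ 𝓛} in W. Then there is a unique h̄ ∈ S(𝓛) ≤ GL(V) extending h, i.e. h̄(w) = h(w) for all w ∈ W. -/

import Mathlib

/-!
An element of `S(𝓛)` moves a vector `x ≠ 0` only inside the bottom of the jump of `𝓛` at which
`x` enters, so it maps every member of `𝓛` onto itself, and `S(𝓛)` is closed under inverses.
Hence `h` and `h⁻¹` are continuous for the `𝓛`-topology and, `V` being complete, extend to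
mutually inverse continuous linear maps of `V`. The extension stabilises every jump `(B, T)`:
`T ≠ 0` is open, so `T ∩ W` is dense in `T`, while `B` is closed. Uniqueness holds because every
element of `S(𝓛)` is continuous and `W` is dense in the Hausdorff space `V`.
-/

section Defs

variable {F V : Type*} [Field F] [AddCommGroup V] [Module F V]

/-- A *series* in a vector space `V`. -/
def IsSeries (𝓛 : Set (Submodule F V)) : Prop :=
  ⊥ ∈ 𝓛 ∧ ⊤ ∈ 𝓛 ∧ IsChain (· ≤ ·) 𝓛 ∧
    ∀ 𝓕 : Set (Submodule F V), 𝓕 ⊆ 𝓛 → 𝓕.Nonempty → sInf 𝓕 ∈ 𝓛 ∧ sSup 𝓕 ∈ 𝓛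

/-- `(B, T)` is a *jump* of the series `𝓛`. -/
def IsJump (𝓛 : Set (Submodule F V)) (B T : Submodule F V) : Prop :=
  B ∈ 𝓛 ∧ T ∈ 𝓛 ∧ B < T ∧ ∀ U ∈ 𝓛, B ≤ U → U ≤ T → U = B ∨ U = T

/-- The *stability group* `S(𝓛)` of a series `𝓛`. -/
def stab (𝓛 : Set (Submodule F V)) : Set (V ≃ₗ[F] V) :=
  {g | ∀ B T : Submodule F V, IsJump 𝓛 B T → ∀ x ∈ T, g x - x ∈ B}

end Defs

open Filter Topology Set

section Series

variable {F V V' : Type*} [Field F] [AddCommGroup V] [Module F V] [AddCommGroup V'] [Module F V']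

/-- For `x ≠ 0`, `(jumpBot 𝓛 x, jumpTop 𝓛 x)` is the jump of `𝓛` across which `x` enters. -/
def jumpBot (𝓛 : Set (Submodule F V)) (x : V) : Submodule F V := sSup {U | U ∈ 𝓛 ∧ x ∉ U}

def jumpTop (𝓛 : Set (Submodule F V)) (x : V) : Submodule F V := sInf {U | U ∈ 𝓛 ∧ x ∈ U}

def comapSeries (f : V' →ₗ[F] V) (𝓛 : Set (Submodule F V)) : Set (Submodule F V') :=
  {X | ∃ U ∈ 𝓛, X = U.comap f}

variable {𝓛 : Set (Submodule F V)} {B T U : Submodule F V} {x : V}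

lemma mem_jumpTop : x ∈ jumpTop 𝓛 x :=
  Submodule.mem_sInf.2 fun _ hU => hU.2

lemma le_jumpBot (hU : U ∈ 𝓛) (hx : x ∉ U) : U ≤ jumpBot 𝓛 x :=
  le_sSup ⟨hU, hx⟩

lemma jumpBot_le_of_mem (hchain : IsChain (· ≤ ·) 𝓛) (hU : U ∈ 𝓛) (hx : x ∈ U) :
    jumpBot 𝓛 x ≤ U :=
  sSup_le fun _ ⟨hU', hxU'⟩ => (hchain.total hU' hU).resolve_right fun h => hxU' (h hx)

lemma IsJump.jumpBot_le (hchain : IsChain (· ≤ ·) 𝓛) (hBT : IsJump 𝓛 B T) (hx : x ∈ T) :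
    jumpBot 𝓛 x ≤ B := by
  obtain ⟨hB, hT, -, hmax⟩ := hBT
  refine sSup_le fun U ⟨hU, hxU⟩ => (hchain.total hU hB).elim id fun hBU => ?_
  rcases hmax U hU hBU ((le_jumpBot hU hxU).trans (jumpBot_le_of_mem hchain hT hx)) with
    rfl | rfl
  · exact le_rfl
  · exact absurd hx hxU

namespace IsSeries

variable (hser : IsSeries 𝓛)
include hser

lemma notMem_jumpBot (hx : x ≠ 0) : x ∉ jumpBot 𝓛 x := by
  have hne : {U | U ∈ 𝓛 ∧ x ∉ U}.Nonempty := ⟨⊥, hser.1, by simpa using hx⟩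
  rw [jumpBot, Submodule.mem_sSup_of_directed hne (hser.2.2.1.mono fun _ hU => hU.1).directedOn]
  rintro ⟨U, ⟨-, hxU⟩, hx⟩
  exact hxU hx

lemma isJump_jumpBot_jumpTop (hx : x ≠ 0) : IsJump 𝓛 (jumpBot 𝓛 x) (jumpTop 𝓛 x) := by
  have hT : jumpTop 𝓛 x ∈ 𝓛 :=
    (hser.2.2.2 {U | U ∈ 𝓛 ∧ x ∈ U} (fun _ hU => hU.1) ⟨⊤, hser.2.1, trivial⟩).1
  have hB : jumpBot 𝓛 x ∈ 𝓛 :=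
    (hser.2.2.2 {U | U ∈ 𝓛 ∧ x ∉ U} (fun _ hU => hU.1) ⟨⊥, hser.1, by simpa using hx⟩).2
  have hBT : jumpBot 𝓛 x ≤ jumpTop 𝓛 x := jumpBot_le_of_mem hser.2.2.1 hT mem_jumpTop
  refine ⟨hB, hT, hBT.lt_of_ne fun h => hser.notMem_jumpBot hx (h ▸ mem_jumpTop),
    fun U hU hBU hUT => ?_⟩
  by_cases hxU : x ∈ U
  · exact Or.inr (hUT.antisymm (sInf_le ⟨hU, hxU⟩))
  · exact Or.inl ((le_jumpBot hU hxU).antisymm hBU)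

lemma mem_stab_iff {g : V ≃ₗ[F] V} : g ∈ stab 𝓛 ↔ ∀ x, g x - x ∈ jumpBot 𝓛 x := by
  refine ⟨fun hg x => ?_, fun hg B T hBT x hx => hBT.jumpBot_le hser.2.2.1 hx (hg x)⟩
  rcases eq_or_ne x 0 with rfl | hx
  · simp
  · exact hg _ _ (hser.isJump_jumpBot_jumpTop hx) x mem_jumpTop

variable {g : V ≃ₗ[F] V} (hg : g ∈ stab 𝓛)
include hg

lemma sub_mem_of_mem_stab (hU : U ∈ 𝓛) (hx : x ∈ U) : g x - x ∈ U :=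
  jumpBot_le_of_mem hser.2.2.1 hU hx ((hser.mem_stab_iff).1 hg x)

lemma map_mem_iff_of_mem_stab (hU : U ∈ 𝓛) : g x ∈ U ↔ x ∈ U := by
  refine ⟨fun hgx => by_contra fun hxU => ?_, fun hx => ?_⟩
  · refine hser.notMem_jumpBot (x := x) (by rintro rfl; exact hxU U.zero_mem) ?_
    simpa using sub_mem (le_jumpBot hU hxU hgx) ((hser.mem_stab_iff).1 hg x)
  · simpa using add_mem hx (hser.sub_mem_of_mem_stab hg hU hx)

lemma jumpBot_apply_of_mem_stab : jumpBot 𝓛 (g x) = jumpBot 𝓛 x := by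
  simp only [jumpBot]
  congr 1
  ext U
  exact and_congr_right fun hU => not_congr (hser.map_mem_iff_of_mem_stab hg hU)

lemma symm_mem_stab : g.symm ∈ stab 𝓛 := by
  refine (hser.mem_stab_iff).2 fun x => ?_
  have h := (hser.mem_stab_iff).1 hg (g.symm x)
  rw [← hser.jumpBot_apply_of_mem_stab hg, g.apply_symm_apply] at h
  simpa using neg_mem h

end IsSeries

lemma IsSeries.comapSeries (hser : IsSeries 𝓛) {f : V' →ₗ[F] V} (hf : Function.Injective f) :
    IsSeries (comapSeries f 𝓛) := by
  obtain ⟨hbot, htop, hchain, hclosed⟩ := hser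
  have hmono : Monotone (Submodule.comap f) := fun _ _ => Submodule.comap_mono
  refine ⟨⟨⊥, hbot, by rw [Submodule.comap_bot, LinearMap.ker_eq_bot.2 hf]⟩,
    ⟨⊤, htop, (Submodule.comap_top f).symm⟩, ?_, fun 𝓕 h𝓕 hne => ?_⟩
  · rintro _ ⟨U, hU, rfl⟩ _ ⟨U', hU', rfl⟩ -
    exact (hchain.total hU hU').imp (hmono ·) (hmono ·)
  obtain ⟨𝓖, h𝓖, rfl⟩ : ∃ 𝓖 ⊆ 𝓛, 𝓕 = Submodule.comap f '' 𝓖 := by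
    refine ⟨{U | U ∈ 𝓛 ∧ U.comap f ∈ 𝓕}, fun _ hU => hU.1, Set.ext fun X => ⟨fun hX => ?_, ?_⟩⟩
    · obtain ⟨U, hU, rfl⟩ := h𝓕 hX
      exact ⟨U, ⟨hU, hX⟩, rfl⟩
    · rintro ⟨U, ⟨-, hX⟩, rfl⟩
      exact hX
  have hne' : 𝓖.Nonempty := hne.of_image
  have hchain' : IsChain (· ≤ ·) 𝓖 := hchain.mono h𝓖
  have hchain'' : IsChain (· ≤ ·) (Submodule.comap f '' 𝓖) :=
    hchain'.image_of_map_rel _ _ _ fun _ _ h => hmono h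
  refine ⟨⟨sInf 𝓖, (hclosed 𝓖 h𝓖 hne').1, ?_⟩, ⟨sSup 𝓖, (hclosed 𝓖 h𝓖 hne').2, ?_⟩⟩
  · ext x
    simp [Submodule.mem_sInf]
  · ext x
    rw [Submodule.mem_comap, Submodule.mem_sSup_of_directed hne' hchain'.directedOn,
      Submodule.mem_sSup_of_directed hne hchain''.directedOn]
    simp

lemma IsJump.sub_mem_of_mem_stab_comapSeries (hser : IsSeries 𝓛) {f : V' →ₗ[F] V}
    (hf : Function.Injective f) (hBT : IsJump 𝓛 B T) {g : V' ≃ₗ[F] V'}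
    (hg : g ∈ stab (comapSeries f 𝓛)) {x : V'} (hx : f x ∈ T) : f (g x) - f x ∈ B := by
  have hle : jumpBot (comapSeries f 𝓛) x ≤ B.comap f := by
    refine sSup_le ?_
    rintro _ ⟨⟨U, hU, rfl⟩, hxU⟩
    exact Submodule.comap_mono ((le_jumpBot hU hxU).trans (hBT.jumpBot_le hser.2.2.1 hx))
  simpa using hle (((hser.comapSeries hf).mem_stab_iff).1 hg x)

end Series

section Topology

variable {F V : Type*} [Field F] [AddCommGroup V] [Module F V]
variable [TopologicalSpace V] [IsTopologicalAddGroup V] {𝓛 : Set (Submodule F V)}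
  (hbasis : (𝓝 (0 : V)).HasBasis (fun U : Submodule F V => U ∈ 𝓛 ∧ U ≠ ⊥) (fun U => (U : Set V)))
include hbasis

lemma continuous_of_preimage_mem_nhds_zero {E M : Type*} [AddGroup E] [TopologicalSpace E]
    [IsTopologicalAddGroup E] [FunLike M E V] [AddMonoidHomClass M E V] (f : M)
    (hf : ∀ U ∈ 𝓛, U ≠ ⊥ → f ⁻¹' U ∈ 𝓝 0) : Continuous f :=
  continuous_of_continuousAt_zero f <| by
    rw [ContinuousAt, map_zero, hbasis.tendsto_right_iff]
    exact fun U hU => hf U hU.1 hU.2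

lemma continuous_of_mapsTo {M : Type*} [FunLike M V V] [AddMonoidHomClass M V V] (f : M)
    (hf : ∀ U ∈ 𝓛, MapsTo f U U) : Continuous f :=
  continuous_of_preimage_mem_nhds_zero hbasis f fun U hU hU0 =>
    mem_of_superset (hbasis.mem_of_mem ⟨hU, hU0⟩) (hf U hU)

lemma continuousConstSMul_of_hasBasis : ContinuousConstSMul F V :=
  ⟨fun c => continuous_of_mapsTo hbasis (DistribSMul.toAddMonoidHom V c)
    fun U _ _ hx => U.smul_mem c hx⟩

lemma IsSeries.continuous_of_mem_stab (hser : IsSeries 𝓛) {g : V ≃ₗ[F] V} (hg : g ∈ stab 𝓛) :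
    Continuous g :=
  continuous_of_mapsTo hbasis g fun _ hU _ hx => (hser.map_mem_iff_of_mem_stab hg hU).2 hx

lemma isOpen_of_mem_of_ne_bot {U : Submodule F V} (hU : U ∈ 𝓛) (hU0 : U ≠ ⊥) :
    IsOpen (U : Set V) :=
  U.toAddSubgroup.isOpen_of_mem_nhds (hbasis.mem_of_mem ⟨hU, hU0⟩)

lemma isClosed_of_mem [T1Space V] {U : Submodule F V} (hU : U ∈ 𝓛) : IsClosed (U : Set V) := by
  rcases eq_or_ne U ⊥ with rfl | hU0
  · simp
  · exact U.toAddSubgroup.isClosed_of_isOpen (isOpen_of_mem_of_ne_bot hbasis hU hU0)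

end Topology

section Extension

variable {F V : Type*} [Field F] [AddCommGroup V] [Module F V]
variable [UniformSpace V] [IsUniformAddGroup V] {W : Submodule F V}

lemma exists_continuousLinearEquiv_extension [T0Space V] [CompleteSpace V]
    [ContinuousConstSMul F V] (hW : Dense (W : Set V)) (h : W ≃ₗ[F] W)
    (hc : Continuous fun w => (h w : V)) (hc' : Continuous fun w => (h.symm w : V)) :
    ∃ g : V ≃L[F] V, ∀ w : W, g w = h w := by
  have := W.toAddSubgroup.isUniformAddGroup
  have hd : DenseRange W.subtypeL := hW.denseRange_val
  have hu : IsUniformInducing W.subtypeL := isUniformEmbedding_subtype_val.isUniformInducing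
  set ψ := ContinuousLinearMap.extend ⟨W.subtype ∘ₗ h.toLinearMap, hc⟩ W.subtypeL
  set φ := ContinuousLinearMap.extend ⟨W.subtype ∘ₗ h.symm.toLinearMap, hc'⟩ W.subtypeL
  have hψ (w : W) : ψ w = h w := ContinuousLinearMap.extend_eq _ hd hu w
  have hφ (w : W) : φ w = h.symm w := ContinuousLinearMap.extend_eq _ hd hu w
  have eq_of_fixes {χ : V → V} (hχ : Continuous χ) (hfix : ∀ w : W, χ w = w) : χ = id :=
    hχ.ext_on hW continuous_id fun x hx => hfix ⟨x, hx⟩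
  refine ⟨.equivOfInverse ψ φ (congrFun (eq_of_fixes (φ.continuous.comp ψ.continuous) ?_))
    (congrFun (eq_of_fixes (ψ.continuous.comp φ.continuous) ?_)), hψ⟩
  · intro w
    simp [hψ, hφ]
  · intro w
    simp [hψ, hφ]

variable {𝓛 : Set (Submodule F V)}
  (hbasis : (𝓝 (0 : V)).HasBasis (fun U : Submodule F V => U ∈ 𝓛 ∧ U ≠ ⊥) (fun U => (U : Set V)))
  (hser : IsSeries 𝓛)
include hbasis hser

lemma continuous_coe_apply_of_mem_stab_comapSeries {h : W ≃ₗ[F] W}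
    (hh : h ∈ stab (comapSeries W.subtype 𝓛)) : Continuous fun w => (h w : V) := by
  have hser' := hser.comapSeries W.injective_subtype
  refine continuous_of_preimage_mem_nhds_zero hbasis (W.subtype ∘ₗ h.toLinearMap)
    fun U hU hU0 => mem_of_superset (x := Subtype.val ⁻¹' (U : Set V)) ?_ fun w hw => ?_
  · exact continuous_subtype_val.continuousAt.preimage_mem_nhds (hbasis.mem_of_mem ⟨hU, hU0⟩)
  · exact (hser'.map_mem_iff_of_mem_stab hh (U := U.comap W.subtype) ⟨U, hU, rfl⟩).2 hw

lemma mem_stab_of_extends [T1Space V] (hW : Dense (W : Set V)) {h : W ≃ₗ[F] W}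
    (hh : h ∈ stab (comapSeries W.subtype 𝓛)) {g : V ≃ₗ[F] V} (hg : Continuous g)
    (hgh : ∀ w : W, g w = h w) : g ∈ stab 𝓛 := by
  intro B T hBT x hx
  have hT : IsOpen (T : Set V) :=
    isOpen_of_mem_of_ne_bot hbasis hBT.2.1 (ne_bot_of_gt hBT.2.2.1)
  have hmaps : MapsTo (fun v => g v - v) ((T : Set V) ∩ W) B := fun v ⟨hvT, hvW⟩ => by
    simpa [hgh ⟨v, hvW⟩] using
      hBT.sub_mem_of_mem_stab_comapSeries hser W.injective_subtype hh (x := ⟨v, hvW⟩) hvT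
  have hmem := hmaps.closure (hg.sub continuous_id) (hW.open_subset_closure_inter hT hx)
  rwa [(isClosed_of_mem hbasis hBT.1).closure_eq] at hmem

end Extension

/-- Suppose the `𝓛`-topology on `V` (the group topology whose
neighborhoods of `0` have the nonzero members of `𝓛` as a basis) is Hausdorff and
complete.  If `W ≤ V` is dense and `h ∈ GL(W)` lies in the stability group of the
induced series `{U ∩ W : U ∈ 𝓛}`, then there is a unique `h̄ ∈ S(𝓛)` with
`h̄ w = h w` for all `w ∈ W`. -/
theorem stmt13 {F V : Type*} [Field F] [AddCommGroup V] [Module F V]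
    [UniformSpace V] [IsUniformAddGroup V]
    (𝓛 : Set (Submodule F V)) (hser : IsSeries 𝓛)
    (hbasis : (nhds (0 : V)).HasBasis
      (fun U : Submodule F V => U ∈ 𝓛 ∧ U ≠ ⊥) (fun U => (U : Set V)))
    (hT2 : T2Space V) (hcompl : CompleteSpace V)
    (W : Submodule F V) (hdense : Dense (W : Set V))
    (h : ↥W ≃ₗ[F] ↥W)
    (hstab : h ∈ stab {X : Submodule F ↥W | ∃ U ∈ 𝓛, X = U.comap W.subtype}) :
    ∃! hbar : V ≃ₗ[F] V, hbar ∈ stab 𝓛 ∧ ∀ w : ↥W, hbar (w : V) = (h w : V) := by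
  have := continuousConstSMul_of_hasBasis hbasis
  have hser' := hser.comapSeries W.injective_subtype
  obtain ⟨g, hg⟩ := exists_continuousLinearEquiv_extension hdense h
    (continuous_coe_apply_of_mem_stab_comapSeries hbasis hser hstab)
    (continuous_coe_apply_of_mem_stab_comapSeries hbasis hser (hser'.symm_mem_stab hstab))
  refine ⟨g, ⟨mem_stab_of_extends hbasis hser hdense hstab g.continuous hg, hg⟩, ?_⟩
  rintro g' ⟨hg's, hg'h⟩
  refine LinearEquiv.ext (congrFun ((hser.continuous_of_mem_stab hbasis hg's).ext_on hdense
    g.continuous fun x hx => ?_))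
  exact (hg'h ⟨x, hx⟩).trans (hg ⟨x, hx⟩).symm
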